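/- Let q be a prime power with q ≥ 4, let l ≥ 1, let a_1, ..., a_l be distinct elements of F_q, let D = F_q \ {a_1, ..., a_l}, and let 2 ≤ k ≤ q - l - 1. Fix j with 1 ≤ j ≤ l and set f_j(x) = (x - a_j)^{q-2}. Then d(f_j(D), C_q(D,k)) = (q - l) - k; in particular, f_j(D) is a deep hole of the generalized Reed-Solomon code C_q(D,k). -/

import Mathlib

/-!
On `D`, the word `(x - a_j)^(q-2)` is `x ↦ (x - a_j)⁻¹`. A codeword `f(D)` with `deg f < k`
can agree with it only at roots of `(X - a_j) f - 1`, which is nonzero (it is `-1` at `a_j ∉ D`)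
of degree at most `k`; so the distance is at least `|D| - k`. Conversely, every word is within
`|D| - k` of the codeword interpolating it on `min k |D|` points of `D`.
-/

open Polynomial

/-- The generalized Reed-Solomon code `C_q(D, k)`: the set of words
`(f(x))_{x ∈ D}` for polynomials `f ∈ F_q[x]` of degree at most `k - 1`. -/
def genRSCode (F : Type*) [Field F] (D : Finset F) (k : ℕ) : Set (↥D → F) :=
  {w | ∃ f : F[X], f.degree < (k : ℕ) ∧ ∀ x : ↥D, w x = f.eval (x : F)}

/-- The error distance `d(u, C_q(D, k))` of a received word `u ∈ F_q^n` to the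
generalized Reed-Solomon code: the minimum Hamming distance to a codeword. -/
noncomputable def errDist {F : Type*} [Field F] [DecidableEq F]
    (D : Finset F) (k : ℕ) (u : ↥D → F) : ℕ :=
  sInf {d : ℕ | ∃ w ∈ genRSCode F D k, d = hammingDist u w}

open Finset

theorem FiniteField.pow_card_sub_two_eq_inv {K : Type*} [Field K] [Fintype K] {x : K}
    (hx : x ≠ 0) : x ^ (Fintype.card K - 2) = x⁻¹ := by
  refine eq_inv_of_mul_eq_one_right ?_
  have hcard : 2 ≤ Fintype.card K := Fintype.one_lt_card
  rw [← pow_succ', show Fintype.card K - 2 + 1 = Fintype.card K - 1 by omega,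
    FiniteField.pow_card_sub_one_eq_one x hx]

section ReedSolomon

variable {F : Type*} [Field F] {D : Finset F} {k : ℕ}

theorem zero_mem_genRSCode : (0 : ↥D → F) ∈ genRSCode F D k :=
  ⟨0, by simp, by simp⟩

variable [DecidableEq F]

theorem errDist_le_hammingDist {u w : ↥D → F} (hw : w ∈ genRSCode F D k) :
    errDist D k u ≤ hammingDist u w :=
  Nat.sInf_le ⟨w, hw, rfl⟩

theorem le_errDist {u : ↥D → F} {n : ℕ} (h : ∀ w ∈ genRSCode F D k, n ≤ hammingDist u w) :
    n ≤ errDist D k u :=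
  le_csInf ⟨_, 0, zero_mem_genRSCode, rfl⟩ (by rintro _ ⟨w, hw, rfl⟩; exact h w hw)

theorem errDist_le_card_sub (u : ↥D → F) : errDist D k u ≤ #D - k := by
  obtain ⟨S, -, hS⟩ := exists_subset_card_eq (s := (univ : Finset ↥D)) (n := min k #D)
    (by simp)
  have hinj : Set.InjOn Subtype.val (S : Set ↥D) := Subtype.val_injective.injOn
  set f := Lagrange.interpolate S Subtype.val u
  have hf : (fun x : ↥D => f.eval (x : F)) ∈ genRSCode F D k := by
    refine ⟨f, (Lagrange.degree_interpolate_lt u hinj).trans_le ?_, fun _ => rfl⟩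
    exact_mod_cast hS.le.trans (min_le_left _ _)
  calc errDist D k u ≤ hammingDist u _ := errDist_le_hammingDist hf
    _ ≤ #Sᶜ := card_le_card fun x hx => mem_compl.2 fun hxS =>
        (mem_filter.1 hx).2 (Lagrange.eval_interpolate_at_node u hinj hxS).symm
    _ = #D - k := by rw [card_compl, Fintype.card_coe, hS]; omega

theorem card_filter_inv_sub_eq_le {a : F} (ha : a ∉ D) {w : ↥D → F}
    (hw : w ∈ genRSCode F D k) : #{x : ↥D | ((x : F) - a)⁻¹ = w x} ≤ k := by
  obtain ⟨f, hf, hwf⟩ := hw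
  set g : F[X] := (X - C a) * f - 1
  have hg : g ≠ 0 := fun h => by simpa [g] using congrArg (eval a) h
  have hdeg : g.natDegree ≤ k := by
    rcases eq_or_ne f 0 with rfl | hf0
    · simp [g]
    have hfk : f.natDegree < k := (natDegree_lt_iff_degree_lt hf0).2 hf
    calc g.natDegree ≤ max ((X - C a) * f).natDegree (1 : F[X]).natDegree := natDegree_sub_le _ _
      _ ≤ k := by
        rw [natDegree_mul (X_sub_C_ne_zero a) hf0, natDegree_X_sub_C, natDegree_one]
        omega
  have hroot : ∀ x ∈ ({x : ↥D | ((x : F) - a)⁻¹ = w x} : Finset ↥D),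
      (x : F) ∈ g.roots.toFinset := by
    intro x hx
    have hxa : (x : F) - a ≠ 0 := sub_ne_zero.2 (ne_of_mem_of_not_mem x.2 ha)
    rw [Multiset.mem_toFinset, mem_roots hg, IsRoot, eval_sub, eval_mul, eval_sub, eval_X,
      eval_C, eval_one, ← hwf x, ← (mem_filter.1 hx).2, mul_inv_cancel₀ hxa, sub_self]
  calc #{x : ↥D | ((x : F) - a)⁻¹ = w x}
      ≤ #g.roots.toFinset := card_le_card_of_injOn _ hroot Subtype.val_injective.injOn
    _ ≤ Multiset.card g.roots := Multiset.toFinset_card_le _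
    _ ≤ g.natDegree := card_roots' g
    _ ≤ k := hdeg

theorem card_sub_le_hammingDist_inv_sub {a : F} (ha : a ∉ D) {w : ↥D → F}
    (hw : w ∈ genRSCode F D k) : #D - k ≤ hammingDist (fun x : ↥D => ((x : F) - a)⁻¹) w := by
  have hsplit := card_filter_add_card_filter_not (s := (univ : Finset ↥D))
    (p := fun x => ((x : F) - a)⁻¹ = w x)
  rw [card_univ, Fintype.card_coe] at hsplit
  have := card_filter_inv_sub_eq_le ha hw
  change #D - k ≤ #{x : ↥D | ¬((x : F) - a)⁻¹ = w x}
  omega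

theorem errDist_inv_sub {a : F} (ha : a ∉ D) :
    errDist D k (fun x : ↥D => ((x : F) - a)⁻¹) = #D - k :=
  le_antisymm (errDist_le_card_sub _) (le_errDist fun _ hw => card_sub_le_hammingDist_inv_sub ha hw)

end ReedSolomon

theorem fj_is_deep_hole_general {F : Type*} [Field F] [Fintype F] [DecidableEq F]
    (q l k : ℕ) (hq : q = Fintype.card F)
    (a : Fin l → F) (ha : Function.Injective a)
    (D : Finset F) (hD : D = Finset.univ \ Finset.image a Finset.univ)
    (j : Fin l) :
    errDist D k (fun x : ↥D => ((X - C (a j)) ^ (q - 2)).eval (x : F))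
      = (q - l) - k := by
  have haj : a j ∉ D := by simp [hD]
  have hfj : (fun x : ↥D => ((X - C (a j)) ^ (q - 2)).eval (x : F)) =
      fun x : ↥D => ((x : F) - a j)⁻¹ := funext fun x => by
    have hxa : (x : F) - a j ≠ 0 := sub_ne_zero.2 (ne_of_mem_of_not_mem x.2 haj)
    simpa [hq] using FiniteField.pow_card_sub_two_eq_inv hxa
  have hcard : #D = q - l := by
    rw [hD, card_sdiff_of_subset (subset_univ _), card_image_of_injective _ ha, card_univ,
      card_univ, Fintype.card_fin, hq]
  rw [hfj, errDist_inv_sub haj, hcard]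

/-- With `D = F_q \ {a_1, ..., a_l}`, `2 ≤ k ≤ q - l - 1` and
`f_j(x) = (x - a_j)^(q-2)`, the error distance of `f_j(D)` to `C_q(D,k)` is
`(q - l) - k`; in particular `f_j(D)` is a deep hole. -/
theorem fj_is_deep_hole {F : Type*} [Field F] [Fintype F] [DecidableEq F]
    (q l k : ℕ) (hq : q = Fintype.card F) (hq4 : 4 ≤ q) (hl : 1 ≤ l)
    (a : Fin l → F) (ha : Function.Injective a)
    (D : Finset F) (hD : D = Finset.univ \ Finset.image a Finset.univ)
    (hk2 : 2 ≤ k) (hk : k ≤ q - l - 1) (j : Fin l) :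
    errDist D k (fun x : ↥D => ((X - C (a j)) ^ (q - 2)).eval (x : F))
      = (q - l) - k :=
  fj_is_deep_hole_general q l k hq a ha D hD j
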